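/- arXiv:2007.10320 — 3 statements merged into one kernel-verified Lean document; each statement's English description precedes it below -/
import Mathlib

section
/- Let H' be an r-partite r-graph (r ≥ 3) with nonempty parts U_1,...,U_r on at most n vertices, with no isolated vertices, such that |U_1| ≥ |U_i| for all i, and such that every pair (u_1,u_2) ∈ U_1×U_2 contained in a common edge has codegree at most 2Δ_{12} and at least Δ_{12}/D (for some D ≥ 1). Suppose e(H') ≥ α K n^{r-1}/L for positive reals α, K, L. Then either the shadow ∂_{12} (the set of pairs in U_1×U_2 contained in some edge) satisfies |∂_{12}| ≥ √K |U_1|^{3/2}, or the shadow ∂_{13} satisfies |∂_{13}| ≥ (α √K n^2) / (2 D L |U_1|^{1/2}). -/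
open Finset

/-- codegree of a pair of vertices in a hypergraph -/
def codeg {V : Type*} [DecidableEq V] (H : Finset (Finset V)) (u v : V) : ℕ :=
  (H.filter (fun f => u ∈ f ∧ v ∈ f)).card

/-- the shadow ∂_{ij}: pairs of vertices in parts i and j lying in a common edge -/
def shadowPairs {V : Type*} [Fintype V] [DecidableEq V] {r : ℕ}
    (part : V → Fin r) (H : Finset (Finset V)) (i j : Fin r) : Finset (V × V) :=
  Finset.univ.filter (fun p => part p.1 = i ∧ part p.2 = j ∧ ∃ e ∈ H, p.1 ∈ e ∧ p.2 ∈ e)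

/-!
Every edge meets `U₁` and `U₂`, and every pair of `∂₁₂` lies in at most `2Δ` edges, so
`e(H') ≤ 2Δ |∂₁₂|`. On the other hand, a vertex `u₁ ∈ U₁` lies in some edge, hence in a pair
`(u₁, u₂)` of codegree at least `Δ / D`; as three vertices lie in at most `n^(r-3)` edges, `u₁` has
at least `Δ / (D n^(r-3))` neighbours in `∂₁₃`, so `|∂₁₃| ≥ |U₁| Δ / (D n^(r-3))`. If `∂₁₂` is
small, the first bound forces `Δ` to be large, and the second makes `∂₁₃` large.
-/

section Partite

variable {V : Type*} [Fintype V] [DecidableEq V] {r : ℕ}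

def shadowDegree (part : V → Fin r) (H : Finset (Finset V)) (i k : Fin r) (u : V) : ℕ :=
  #{p ∈ shadowPairs part H i k | p.1 = u}

omit [Fintype V] [DecidableEq V] in
theorem exists_mem_part_eq {part : V → Fin r} {e : Finset V} (hcard : e.card = r)
    (hinj : Set.InjOn part e) (i : Fin r) : ∃ v ∈ e, part v = i := by
  have himage : e.image part = univ := by
    apply eq_univ_of_card
    rw [card_image_of_injOn hinj, hcard, Fintype.card_fin]
  simpa using (himage.symm ▸ mem_univ i : i ∈ e.image part)

theorem card_filter_subset_le_choose {H : Finset (Finset V)} (hH : ∀ e ∈ H, e.card = r)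
    (s : Finset V) : #{f ∈ H | s ⊆ f} ≤ (Fintype.card V).choose (r - s.card) := by
  rw [← card_univ, ← card_powersetCard]
  refine card_le_card_of_injOn (· \ s) (fun f hf => ?_) (fun f hf g hg hfg => ?_)
  · rw [mem_coe, mem_filter] at hf
    simp [card_sdiff_of_subset hf.2, hH f hf.1]
  · rw [mem_coe, mem_filter] at hf hg
    rw [← sdiff_union_of_subset hf.2, ← sdiff_union_of_subset hg.2]
    exact congrArg (· ∪ s) hfg

variable {part : V → Fin r} {H : Finset (Finset V)}

theorem card_le_card_shadowPairs_mul (hH : ∀ e ∈ H, e.card = r ∧ Set.InjOn part e)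
    (i j : Fin r) {c : ℝ} (hc : ∀ p ∈ shadowPairs part H i j, (codeg H p.1 p.2 : ℝ) ≤ c) :
    (H.card : ℝ) ≤ #(shadowPairs part H i j) * c := by
  have hcover : H ⊆ (shadowPairs part H i j).biUnion fun p => {f ∈ H | p.1 ∈ f ∧ p.2 ∈ f} := by
    intro e he
    obtain ⟨x, hx, hxi⟩ := exists_mem_part_eq (hH e he).1 (hH e he).2 i
    obtain ⟨y, hy, hyj⟩ := exists_mem_part_eq (hH e he).1 (hH e he).2 j
    simp only [mem_biUnion, shadowPairs, mem_filter, mem_univ, true_and]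
    exact ⟨(x, y), ⟨hxi, hyj, e, he, hx, hy⟩, he, hx, hy⟩
  calc (H.card : ℝ) ≤ ∑ p ∈ shadowPairs part H i j, (codeg H p.1 p.2 : ℝ) := by
        exact_mod_cast (card_le_card hcover).trans card_biUnion_le
    _ ≤ ∑ _p ∈ shadowPairs part H i j, c := sum_le_sum hc
    _ = #(shadowPairs part H i j) * c := by rw [sum_const, nsmul_eq_mul]

theorem codeg_le_shadowDegree_mul (hH : ∀ e ∈ H, e.card = r ∧ Set.InjOn part e)
    {i j k : Fin r} (hij : i ≠ j) (hik : i ≠ k) (hjk : j ≠ k) {u v : V}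
    (hu : part u = i) (hv : part v = j) :
    codeg H u v ≤ shadowDegree part H i k u * Fintype.card V ^ (r - 3) := by
  have hcover : {f ∈ H | u ∈ f ∧ v ∈ f} ⊆ {p ∈ shadowPairs part H i k | p.1 = u}.biUnion
      fun p => {f ∈ H | {u, v, p.2} ⊆ f} := by
    intro f hf
    rw [mem_filter] at hf
    obtain ⟨z, hz, hzk⟩ := exists_mem_part_eq (hH f hf.1).1 (hH f hf.1).2 k
    simp only [mem_biUnion, shadowPairs, mem_filter, mem_univ, true_and, insert_subset_iff,
      singleton_subset_iff]
    exact ⟨(u, z), ⟨⟨hu, hzk, f, hf.1, hf.2.1, hz⟩, rfl⟩, hf.1, hf.2.1, hf.2.2, hz⟩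
  have htriple : ∀ p ∈ {p ∈ shadowPairs part H i k | p.1 = u},
      #{f ∈ H | {u, v, p.2} ⊆ f} ≤ Fintype.card V ^ (r - 3) := by
    intro p hp
    simp only [shadowPairs, mem_filter, mem_univ, true_and] at hp
    have hcard : ({u, v, p.2} : Finset V).card = 3 := by
      rw [card_insert_of_notMem, card_pair]
      · exact fun h => hjk (hv ▸ h ▸ hp.1.2.1)
      · simp only [mem_insert, mem_singleton, not_or]
        exact ⟨fun h => hij (hu ▸ h ▸ hv), fun h => hik (hu ▸ h ▸ hp.1.2.1)⟩
    calc #{f ∈ H | {u, v, p.2} ⊆ f} ≤ (Fintype.card V).choose (r - 3) :=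
          hcard ▸ card_filter_subset_le_choose (fun e he => (hH e he).1) _
      _ ≤ Fintype.card V ^ (r - 3) := Nat.choose_le_pow _ _
  calc codeg H u v ≤ ∑ p ∈ {p ∈ shadowPairs part H i k | p.1 = u}, #{f ∈ H | {u, v, p.2} ⊆ f} :=
        (card_le_card hcover).trans card_biUnion_le
    _ ≤ ∑ _p ∈ {p ∈ shadowPairs part H i k | p.1 = u}, Fintype.card V ^ (r - 3) :=
        sum_le_sum htriple
    _ = shadowDegree part H i k u * Fintype.card V ^ (r - 3) := by
        rw [sum_const, smul_eq_mul, shadowDegree]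

theorem sum_shadowDegree (i k : Fin r) :
    ∑ u ∈ {u | part u = i}, shadowDegree part H i k u = #(shadowPairs part H i k) := by
  refine (card_eq_sum_card_fiberwise fun p hp => ?_).symm
  simp only [shadowPairs, mem_coe, mem_filter, mem_univ, true_and] at hp
  simpa using hp.1

theorem card_mul_le_card_shadowPairs (i k : Fin r) {c : ℝ}
    (hc : ∀ u, part u = i → c ≤ shadowDegree part H i k u) :
    (#{u | part u = i} : ℝ) * c ≤ #(shadowPairs part H i k) := by
  rw [← sum_shadowDegree, ← nsmul_eq_mul, ← sum_const, Nat.cast_sum]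
  exact sum_le_sum fun u hu => hc u (mem_filter.1 hu).2

theorem card_mul_div_le_card_shadowPairs (hH : ∀ e ∈ H, e.card = r ∧ Set.InjOn part e)
    {n : ℕ} (hn : 0 < n) (hV : Fintype.card V ≤ n) {i j k : Fin r} (hij : i ≠ j) (hik : i ≠ k)
    (hjk : j ≠ k) {c : ℝ} (hc : ∀ u, part u = i → ∃ v, part v = j ∧ c ≤ codeg H u v) :
    (#{u | part u = i} : ℝ) * (c / (n : ℝ) ^ (r - 3)) ≤ #(shadowPairs part H i k) := by
  refine card_mul_le_card_shadowPairs i k fun u hu => ?_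
  obtain ⟨v, hv, hcv⟩ := hc u hu
  have hcount : (codeg H u v : ℝ) ≤ shadowDegree part H i k u * (n : ℝ) ^ (r - 3) := by
    exact_mod_cast (codeg_le_shadowDegree_mul hH hij hik hjk hu hv).trans
      (Nat.mul_le_mul_left _ (Nat.pow_le_pow_left hV _))
  rw [div_le_iff₀ (by positivity)]
  exact hcv.trans hcount

end Partite

theorem sqrt_mul_le_or_le_of_le_mul {u K D L m N α Δ E P₁₂ P₁₃ : ℝ} (hu : 0 < u) (hK : 0 < K)
    (hD : 0 < D) (hL : 0 < L) (hm : 0 < m) (hΔ : 0 ≤ Δ) (hE : α * K * (m * N) / L ≤ E)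
    (hP₁₂ : E ≤ P₁₂ * (2 * Δ)) (hP₁₃ : u * (Δ / D / m) ≤ P₁₃) :
    √K * u * √u ≤ P₁₂ ∨ α * √K * N / (2 * D * L * √u) ≤ P₁₃ := by
  rw [div_div] at hP₁₃
  refine or_iff_not_imp_left.2 fun hsmall => le_trans ?_ hP₁₃
  have hsK : √K * √K = K := Real.mul_self_sqrt hK.le
  have hsKpos : 0 < √K := Real.sqrt_pos.2 hK
  have hΔlarge : α * K * (m * N) ≤ L * (√K * u * √u * (2 * Δ)) :=
    calc α * K * (m * N) ≤ L * E := by rw [mul_comm L]; exact (div_le_iff₀ hL).1 hE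
      _ ≤ L * (P₁₂ * (2 * Δ)) := by gcongr
      _ ≤ L * (√K * u * √u * (2 * Δ)) := by gcongr; exact (not_le.1 hsmall).le
  rw [mul_div_assoc', div_le_div_iff₀ (by positivity) (by positivity)]
  refine le_of_mul_le_mul_left ?_ (mul_pos hsKpos hm)
  calc √K * m * (α * √K * N * (D * m)) = D * m * (α * K * (m * N)) := by
        linear_combination α * N * D * m ^ 2 * hsK
    _ ≤ D * m * (L * (√K * u * √u * (2 * Δ))) := by gcongr
    _ = √K * m * (u * Δ * (2 * D * L * √u)) := by ring

/-- Parts U₁, U₂, U₃ are the fibres of `part` over `i1`, `i2`, `i3`. -/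
theorem shadow_dichotomy_general (r n : ℕ) (hr : 3 ≤ r)
    {V : Type*} [Fintype V] [DecidableEq V] (hV : Fintype.card V ≤ n)
    (part : V → Fin r) (i1 i2 i3 : Fin r) (hi12 : i1 ≠ i2) (hi13 : i1 ≠ i3) (hi23 : i2 ≠ i3)
    (H' : Finset (Finset V)) (Δ D α K L : ℝ)
    (hD : 1 ≤ D) (hK : 0 < K) (hL : 0 < L)
    (hpartite : ∀ e ∈ H', e.card = r ∧ ∀ u ∈ e, ∀ v ∈ e, u ≠ v → part u ≠ part v)
    (hnoiso : ∀ v : V, ∃ e ∈ H', v ∈ e)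
    (hcodeg : ∀ u v : V, part u = i1 → part v = i2 → (∃ e ∈ H', u ∈ e ∧ v ∈ e) →
      Δ / D ≤ (codeg H' u v : ℝ) ∧ (codeg H' u v : ℝ) ≤ 2 * Δ)
    (he : α * K * (n : ℝ) ^ (r - 1) / L ≤ (H'.card : ℝ)) :
    Real.sqrt K * ((Finset.univ.filter (fun v : V => part v = i1)).card : ℝ) *
        Real.sqrt ((Finset.univ.filter (fun v : V => part v = i1)).card) ≤
        ((shadowPairs part H' i1 i2).card : ℝ) ∨
      α * Real.sqrt K * (n : ℝ) ^ 2 /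
        (2 * D * L * Real.sqrt ((Finset.univ.filter (fun v : V => part v = i1)).card)) ≤
        ((shadowPairs part H' i1 i3).card : ℝ) := by
  rcases (univ.filter fun v : V => part v = i1).eq_empty_or_nonempty with hU₁ | ⟨u₀, hu₀⟩
  · simp [hU₁]
  have hH : ∀ e ∈ H', e.card = r ∧ Set.InjOn part e := fun e he =>
    ⟨(hpartite e he).1, fun u hu v hv huv => by_contra fun h => (hpartite e he).2 u hu v hv h huv⟩
  have hpair : ∀ u, part u = i1 → ∃ v, part v = i2 ∧ ∃ e ∈ H', u ∈ e ∧ v ∈ e := fun u _ => by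
    obtain ⟨e, he, hue⟩ := hnoiso u
    obtain ⟨v, hve, hv⟩ := exists_mem_part_eq (hH e he).1 (hH e he).2 i2
    exact ⟨v, hv, e, he, hue, hve⟩
  have hΔ : 0 ≤ Δ := by
    obtain ⟨v, hv, hedge⟩ := hpair u₀ (mem_filter.1 hu₀).2
    linarith [(hcodeg u₀ v (mem_filter.1 hu₀).2 hv hedge).2, (codeg H' u₀ v).cast_nonneg (α := ℝ)]
  have hP₁₂ := card_le_card_shadowPairs_mul hH i1 i2 fun p hp => by
    simp only [shadowPairs, mem_filter, mem_univ, true_and] at hp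
    exact (hcodeg p.1 p.2 hp.1 hp.2.1 hp.2.2).2
  have hn : 0 < n := (Fintype.card_pos_iff.2 ⟨u₀⟩).trans_le hV
  have hP₁₃ := card_mul_div_le_card_shadowPairs hH hn hV hi12 hi13 hi23 fun u hu => by
    obtain ⟨v, hv, hedge⟩ := hpair u hu
    exact ⟨v, hv, (hcodeg u v hu hv hedge).1⟩
  rw [show r - 1 = r - 3 + 2 by omega, pow_add] at he
  exact sqrt_mul_le_or_le_of_le_mul (Nat.cast_pos.2 (card_pos.2 ⟨u₀, hu₀⟩)) hK
    (by linarith) hL (by positivity) hΔ he hP₁₂ hP₁₃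

/-- either the shadow ∂₁₂ is large, or the shadow ∂₁₃ is large.
Parts U₁, U₂, U₃ are the fibres of `part` over `i1`, `i2`, `i3`. -/
theorem shadow_dichotomy (r n : ℕ) (hr : 3 ≤ r)
    {V : Type*} [Fintype V] [DecidableEq V] (hV : Fintype.card V ≤ n)
    (part : V → Fin r) (i1 i2 i3 : Fin r) (hi12 : i1 ≠ i2) (hi13 : i1 ≠ i3) (hi23 : i2 ≠ i3)
    (H' : Finset (Finset V)) (Δ D α K L : ℝ)
    (hD : 1 ≤ D) (hα : 0 < α) (hK : 0 < K) (hL : 0 < L)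
    (hpartite : ∀ e ∈ H', e.card = r ∧ ∀ u ∈ e, ∀ v ∈ e, u ≠ v → part u ≠ part v)
    (hparts : ∀ i : Fin r, ∃ v : V, part v = i)
    (hnoiso : ∀ v : V, ∃ e ∈ H', v ∈ e)
    (hU1max : ∀ i : Fin r, (Finset.univ.filter (fun v : V => part v = i)).card ≤
        (Finset.univ.filter (fun v : V => part v = i1)).card)
    (hcodeg : ∀ u v : V, part u = i1 → part v = i2 → (∃ e ∈ H', u ∈ e ∧ v ∈ e) →
      Δ / D ≤ (codeg H' u v : ℝ) ∧ (codeg H' u v : ℝ) ≤ 2 * Δ)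
    (he : α * K * (n : ℝ) ^ (r - 1) / L ≤ (H'.card : ℝ)) :
    Real.sqrt K * ((Finset.univ.filter (fun v : V => part v = i1)).card : ℝ) *
        Real.sqrt ((Finset.univ.filter (fun v : V => part v = i1)).card) ≤
        ((shadowPairs part H' i1 i2).card : ℝ) ∨
      α * Real.sqrt K * (n : ℝ) ^ 2 /
        (2 * D * L * Real.sqrt ((Finset.univ.filter (fun v : V => part v = i1)).card)) ≤
        ((shadowPairs part H' i1 i3).card : ℝ) :=
  shadow_dichotomy_general r n hr hV part i1 i2 i3 hi12 hi13 hi23 H' Δ D α K L hD hK hL hpartite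
    hnoiso hcodeg he
end

section
/- For every n ≥ 8 and every integer t with 1 < t ≤ √(n/2), there exists a partial (n,t,2)-Steiner system with at least n²/(4t²) blocks. -/
/-!
Over a finite field `F` with `t ≤ |F|`, fix `t` distinct abscissae `x₁, …, x_t ∈ F`. The
`|F|²` affine functions `y = a x + b` have graphs `{(i, a xᵢ + b)}` of size `t` in the grid
`Fin t × F`, and two affine functions agreeing at two distinct abscissae coincide, so two points
lie on at most one graph. Taking `F = ℤ/q` for a Bertrand prime `⌊n / 2t⌋ < q ≤ 2 ⌊n / 2t⌋`, the
grid has `tq ≤ n` points, so it embeds into `Fin n`, while `n < 2tq` gives `n² < 4t²q²`.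
-/

open Finset Function

variable {α β : Type*}

def IsPartialSteiner (t : ℕ) (S : Finset (Finset α)) : Prop :=
  (∀ b ∈ S, b.card = t) ∧
    ∀ b ∈ S, ∀ c ∈ S, ∀ u v : α, u ≠ v → u ∈ b → v ∈ b → u ∈ c → v ∈ c → b = c

namespace IsPartialSteiner

variable {t : ℕ} {S : Finset (Finset α)}

theorem card_filter_le_one [DecidableEq α] (hS : IsPartialSteiner t S) {u v : α} (huv : u ≠ v) :
    (S.filter fun b => u ∈ b ∧ v ∈ b).card ≤ 1 := by
  rw [card_le_one]
  intro b hb c hc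
  rw [mem_filter] at hb hc
  exact hS.2 b hb.1 c hc.1 u v huv hb.2.1 hb.2.2 hc.2.1 hc.2.2

theorem map (hS : IsPartialSteiner t S) (f : α ↪ β) :
    IsPartialSteiner t (S.map (mapEmbedding f).toEmbedding) := by
  refine ⟨?_, ?_⟩
  · intro _ hb'
    obtain ⟨b, hb, rfl⟩ := mem_map.1 hb'
    simp [hS.1 b hb]
  · intro _ hb' _ hc' u v huv hub hvb huc hvc
    obtain ⟨b, hb, rfl⟩ := mem_map.1 hb'
    obtain ⟨c, hc, rfl⟩ := mem_map.1 hc'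
    simp only [RelEmbedding.coe_toEmbedding, mapEmbedding_apply] at hub hvb huc hvc ⊢
    obtain ⟨u, hu, rfl⟩ := mem_map.1 hub
    obtain ⟨v, hv, rfl⟩ := mem_map.1 hvb
    rw [mem_map' f] at huc hvc
    rw [hS.2 b hb c hc u v (ne_of_apply_ne f huv) hu hv huc hvc]

end IsPartialSteiner

section AffineLines

variable {F ι : Type*} [Field F] [Fintype ι]

theorem eq_and_eq_of_affine_eq_of_affine_eq {a b a' b' x y : F} (hxy : x ≠ y)
    (hx : a * x + b = a' * x + b') (hy : a * y + b = a' * y + b') : a = a' ∧ b = b' := by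
  have hslope : (a - a') * (x - y) = 0 := by linear_combination hx - hy
  have ha : a = a' := sub_eq_zero.1 <| (mul_eq_zero.1 hslope).resolve_right (sub_ne_zero.2 hxy)
  subst ha
  exact ⟨rfl, add_left_cancel hx⟩

/-- The graph of `z ↦ a z + b` over the abscissae `x i`, inside the grid `ι × F`. -/
def affineLine (x : ι → F) (a b : F) : Finset (ι × F) :=
  univ.map ⟨fun i => (i, a * x i + b), fun _ _ h => (Prod.ext_iff.1 h).1⟩

variable {x : ι → F}

theorem mem_affineLine {a b : F} {p : ι × F} : p ∈ affineLine x a b ↔ p.2 = a * x p.1 + b := by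
  constructor
  · intro hp
    obtain ⟨i, -, rfl⟩ := mem_map.1 hp
    rfl
  · intro hp
    exact mem_map.2 ⟨p.1, mem_univ _, Prod.ext rfl hp.symm⟩

theorem card_affineLine (a b : F) : (affineLine x a b).card = Fintype.card ι := by
  simp [affineLine]

theorem eq_and_eq_of_mem_affineLine (hx : Injective x) {a b a' b' : F} {p p' : ι × F}
    (hpp' : p ≠ p') (hp : p ∈ affineLine x a b) (hp' : p' ∈ affineLine x a b)
    (hq : p ∈ affineLine x a' b') (hq' : p' ∈ affineLine x a' b') : a = a' ∧ b = b' := by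
  rw [mem_affineLine] at hp hp' hq hq'
  have hne : p.1 ≠ p'.1 := fun h => hpp' <| Prod.ext h (by rw [hp, hp', h])
  exact eq_and_eq_of_affine_eq_of_affine_eq (hx.ne hne) (hp.symm.trans hq) (hp'.symm.trans hq')

theorem affineLine_injective [Nontrivial ι] (hx : Injective x) :
    Injective fun ab : F × F => affineLine x ab.1 ab.2 := by
  rintro ⟨a, b⟩ ⟨a', b'⟩ h
  obtain ⟨i, j, hij⟩ := exists_pair_ne ι
  have hi : (i, a * x i + b) ∈ affineLine x a b := mem_affineLine.2 rfl
  have hj : (j, a * x j + b) ∈ affineLine x a b := mem_affineLine.2 rfl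
  have h' : affineLine x a b = affineLine x a' b' := h
  obtain ⟨rfl, rfl⟩ := eq_and_eq_of_mem_affineLine hx (fun h => hij (Prod.ext_iff.1 h).1)
    hi hj (h' ▸ hi) (h' ▸ hj)
  rfl

variable [Fintype F] [DecidableEq ι] [DecidableEq F]

def affineLines (x : ι → F) : Finset (Finset (ι × F)) :=
  univ.image fun ab : F × F => affineLine x ab.1 ab.2

theorem isPartialSteiner_affineLines (hx : Injective x) :
    IsPartialSteiner (Fintype.card ι) (affineLines x) := by
  refine ⟨?_, ?_⟩
  · rintro _ hl
    obtain ⟨⟨a, b⟩, -, rfl⟩ := mem_image.1 hl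
    exact card_affineLine a b
  · rintro _ hl _ hl' p p' hpp' hp hp' hq hq'
    obtain ⟨⟨a, b⟩, -, rfl⟩ := mem_image.1 hl
    obtain ⟨⟨a', b'⟩, -, rfl⟩ := mem_image.1 hl'
    obtain ⟨rfl, rfl⟩ := eq_and_eq_of_mem_affineLine hx hpp' hp hp' hq hq'
    rfl

theorem card_affineLines [Nontrivial ι] (hx : Injective x) :
    (affineLines x).card = Fintype.card F ^ 2 := by
  rw [affineLines, card_image_of_injective _ (affineLine_injective hx), card_univ,
    Fintype.card_prod, sq]

end AffineLines

theorem exists_isPartialSteiner_card_eq_sq (F : Type*) [Field F] [Fintype F] [DecidableEq F]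
    [Fintype α] {t : ℕ} (ht : 2 ≤ t) (htF : t ≤ Fintype.card F)
    (hα : t * Fintype.card F ≤ Fintype.card α) :
    ∃ S : Finset (Finset α), IsPartialSteiner t S ∧ S.card = Fintype.card F ^ 2 := by
  obtain ⟨x⟩ := Function.Embedding.nonempty_of_card_le (α := Fin t) (β := F) (by simpa)
  obtain ⟨f⟩ := Function.Embedding.nonempty_of_card_le (α := Fin t × F) (β := α) (by simpa)
  have : Nontrivial (Fin t) := Fin.nontrivial_iff_two_le.2 ht
  refine ⟨(affineLines x).map (mapEmbedding f).toEmbedding, ?_, ?_⟩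
  · simpa using (isPartialSteiner_affineLines x.injective).map f
  · rw [card_map, card_affineLines x.injective]

theorem exists_prime_ge_with_mul_le_lt_two_mul {n t : ℕ} (ht : 0 < t) (h : 2 * t ^ 2 ≤ n) :
    ∃ q, q.Prime ∧ t ≤ q ∧ t * q ≤ n ∧ n < 2 * t * q := by
  set m := n / (2 * t)
  have htm : t ≤ m := (Nat.le_div_iff_mul_le (by omega)).2 (by nlinarith)
  obtain ⟨q, hq, hmq, hqm⟩ := Nat.exists_prime_lt_and_le_two_mul m (by omega)
  have hmn : m * (2 * t) ≤ n := Nat.div_mul_le_self n (2 * t)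
  have hnm : n < m * (2 * t) + 2 * t := Nat.lt_div_mul_add (by omega)
  exact ⟨q, hq, by omega, by nlinarith, by nlinarith⟩

theorem partial_steiner_exists_general (n t : ℕ) (ht1 : 1 < t) (ht : 2 * t ^ 2 ≤ n) :
    ∃ S : Finset (Finset (Fin n)),
      (∀ b ∈ S, b.card = t) ∧
      (∀ u v : Fin n, u ≠ v → (S.filter (fun b => u ∈ b ∧ v ∈ b)).card ≤ 1) ∧
      n ^ 2 ≤ 4 * t ^ 2 * S.card := by
  obtain ⟨q, hq, htq, htqn, hnq⟩ := exists_prime_ge_with_mul_le_lt_two_mul (by omega) ht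
  have : Fact q.Prime := ⟨hq⟩
  obtain ⟨S, hS, hcard⟩ := exists_isPartialSteiner_card_eq_sq (α := Fin n) (ZMod q) ht1
    (by rwa [ZMod.card]) (by rwa [ZMod.card, Fintype.card_fin])
  refine ⟨S, hS.1, fun u v huv => hS.card_filter_le_one huv, ?_⟩
  calc n ^ 2 ≤ (2 * t * q) ^ 2 := Nat.pow_le_pow_left hnq.le 2
    _ = 4 * t ^ 2 * S.card := by rw [hcard, ZMod.card]; ring

/-- for every n ≥ 8 and 1 < t ≤ √(n/2) (i.e. 2t² ≤ n), there is a partial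
(n,t,2)-Steiner system with at least n²/(4t²) blocks. -/
theorem partial_steiner_exists (n t : ℕ) (hn : 8 ≤ n) (ht1 : 1 < t) (ht : 2 * t ^ 2 ≤ n) :
    ∃ S : Finset (Finset (Fin n)),
      (∀ b ∈ S, b.card = t) ∧
      (∀ u v : Fin n, u ≠ v → (S.filter (fun b => u ∈ b ∧ v ∈ b)).card ≤ 1) ∧
      n ^ 2 ≤ 4 * t ^ 2 * S.card :=
  partial_steiner_exists_general n t ht1 ht
end

section
/- Let H be a 3-uniform hypergraph of girth at least five (no Berge cycle of length ≤ 4). Form H(a) by replacing each vertex v with a set U_v of a new vertices and each edge {u,v,w} with a complete 3-partite 3-graph on U_u, U_v, U_w. Let G be any subgraph of H(a) that, for each original edge e of H, uses only a matching inside the blown-up copy K_{a,a,a}^{(3)}(e). Then G has girth at least five; in particular G contains no linear cycle C_4^{(3)}. -/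
open Finset

/-- a Berge cycle of length k in a hypergraph: distinct vertices v₁,…,v_k and distinct
edges e₁,…,e_k with v_i, v_{i+1} ∈ e_i (indices mod k) -/
def BergeCycle {V : Type*} [DecidableEq V] (G : Finset (Finset V)) (k : ℕ) : Prop :=
  ∃ (v : ZMod k → V) (e : ZMod k → Finset V),
    Function.Injective v ∧ Function.Injective e ∧ (∀ i, e i ∈ G) ∧
    ∀ i, v i ∈ e i ∧ v (i + 1) ∈ e i

/-!
Projecting `G` to `H` along `Prod.fst` is injective on every edge, and by the matching
condition two edges of `G` that meet project to different edges of `H`. Hence a Berge cycle of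
length `k ≤ 4` in `G` projects to a closed Berge walk in `H` that repeats no vertex and no edge at
consecutive steps. As `H` has no Berge 2-cycle, two of its edges share at most one vertex, which
also rules out a repetition two steps apart; so the projection is a Berge `k`-cycle of `H`.
A linear `C₄` is in particular a Berge 4-cycle.
-/

def NonbacktrackingBergeWalk {V : Type*} (H : Finset (Finset V)) (k : ℕ) : Prop :=
  ∃ (v : ZMod k → V) (e : ZMod k → Finset V),
    (∀ i, v i ≠ v (i + 1)) ∧ (∀ i, e i ≠ e (i + 1)) ∧ (∀ i, e i ∈ H) ∧
    ∀ i, v i ∈ e i ∧ v (i + 1) ∈ e i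

lemma ZMod.eq_add_one_or_eq_add_one_or_eq_add_two {k : ℕ} (hk0 : k ≠ 0) (hk : k ≤ 4)
    {i j : ZMod k} (hij : i ≠ j) : j = i + 1 ∨ i = j + 1 ∨ j = i + 2 := by
  have hk1 : 1 ≤ k := Nat.one_le_iff_ne_zero.mpr hk0
  revert i j
  interval_cases k <;> decide

section Hypergraph

variable {V : Type*} [DecidableEq V] {H : Finset (Finset V)}

lemma eq_of_mem_of_mem_of_not_bergeCycle_two (hH : ¬ BergeCycle H 2) {e f : Finset V}
    (he : e ∈ H) (hf : f ∈ H) (hef : e ≠ f) {x y : V} (hxe : x ∈ e) (hye : y ∈ e)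
    (hxf : x ∈ f) (hyf : y ∈ f) : x = y := by
  by_contra hxy
  refine hH ⟨![x, y], ![e, f], ?_, ?_, ?_, ?_⟩
  · intro i j h
    fin_cases i <;> fin_cases j <;> first | rfl | exact (hxy h).elim | exact (hxy h.symm).elim
  · intro i j h
    fin_cases i <;> fin_cases j <;> first | rfl | exact (hef h).elim | exact (hef h.symm).elim
  · intro i; fin_cases i; exacts [he, hf]
  · intro i; fin_cases i; exacts [⟨hxe, hye⟩, ⟨hyf, hxf⟩]

lemma NonbacktrackingBergeWalk.bergeCycle (hH : ¬ BergeCycle H 2) {k : ℕ} (hk0 : k ≠ 0)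
    (hk : k ≤ 4) (hW : NonbacktrackingBergeWalk H k) : BergeCycle H k := by
  obtain ⟨v, e, hv, hen, heH, hve⟩ := hW
  have linear : ∀ {i j : ZMod k}, e i ≠ e j →
      ∀ {x y}, x ∈ e i → y ∈ e i → x ∈ e j → y ∈ e j → x = y :=
    fun hij => eq_of_mem_of_mem_of_not_bergeCycle_two hH (heH _) (heH _) hij
  have hv2 : ∀ i, v i ≠ v (i + 2) := by
    intro i h
    have hmem : v i ∈ e (i + 1) := by
      rw [h, show i + 2 = i + 1 + 1 by ring]; exact (hve _).2
    exact hv i (linear (hen i) (hve i).1 (hve i).2 hmem (hve (i + 1)).1)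
  have he2 : ∀ i, e i ≠ e (i + 2) := by
    intro i h
    have hmem : v (i + 1 + 1) ∈ e i := by
      rw [h, show i + 1 + 1 = i + 2 by ring]; exact (hve _).1
    exact hv (i + 1) (linear (hen i) (hve i).2 hmem (hve (i + 1)).1 (hve (i + 1)).2)
  refine ⟨v, e, ?_, ?_, heH, hve⟩
  · intro i j hij
    by_contra hne
    rcases ZMod.eq_add_one_or_eq_add_one_or_eq_add_two hk0 hk hne with rfl | rfl | rfl
    exacts [hv i hij, hv j hij.symm, hv2 i hij]
  · intro i j hij
    by_contra hne
    rcases ZMod.eq_add_one_or_eq_add_one_or_eq_add_two hk0 hk hne with rfl | rfl | rfl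
    exacts [hen i hij, hen j hij.symm, he2 i hij]

lemma bergeCycle_four_of_inter_nonempty {f : ZMod 4 → Finset V} (hfH : ∀ i, f i ∈ H)
    (hf : Function.Injective f) (hmeet : ∀ i, (f i ∩ f (i + 1)).Nonempty)
    (hdisj : ∀ i, Disjoint (f i) (f (i + 2))) : BergeCycle H 4 := by
  choose c hc using hmeet
  simp only [mem_inter] at hc
  refine ⟨c, fun i => f (i + 1), ?_, hf.comp (add_left_injective 1), fun i => hfH _,
    fun i => ⟨(hc i).2, (hc (i + 1)).1⟩⟩
  intro i j hij
  by_contra hne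
  have hmem : ∀ {l p : ZMod 4}, p ∈ ({l, l + 1} : Finset (ZMod 4)) → c l ∈ f p := by
    intro l p hp
    simp only [mem_insert, mem_singleton] at hp
    rcases hp with rfl | rfl
    exacts [(hc _).1, (hc _).2]
  -- of the two edges through `c i` and the two through `c j`, some pair is opposite
  have hopp : ∀ i j : ZMod 4, i ≠ j → ∃ p ∈ ({i, i + 1} : Finset (ZMod 4)),
      ∃ q ∈ ({j, j + 1} : Finset (ZMod 4)), q = p + 2 := by
    decide
  obtain ⟨p, hp, q, hq, rfl⟩ := hopp i j hne
  exact disjoint_left.mp (hdisj p) (hmem hp) (hij ▸ hmem hq)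

end Hypergraph

lemma BergeCycle.nonbacktrackingBergeWalk_image {α β : Type*} [DecidableEq α] [DecidableEq β]
    {G : Finset (Finset α)} {H : Finset (Finset β)} (π : α → β)
    (hmaps : ∀ g ∈ G, g.image π ∈ H) (hinj : ∀ g ∈ G, Set.InjOn π g)
    (hsep : ∀ g ∈ G, ∀ g' ∈ G, g ≠ g' → g.image π = g'.image π → Disjoint g g')
    {k : ℕ} (hk : k ≠ 1) (hC : BergeCycle G k) : NonbacktrackingBergeWalk H k := by
  obtain ⟨v, e, hv, he, heG, hve⟩ := hC
  have hsucc : ∀ i : ZMod k, i ≠ i + 1 := fun i h => by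
    have : (1 : ZMod k) = 0 := by simpa using h.symm
    exact hk (ZMod.one_eq_zero_iff.mp this)
  refine ⟨fun i => π (v i), fun i => (e i).image π, fun i h => ?_, fun i h => ?_,
    fun i => hmaps _ (heG i),
    fun i => ⟨mem_image_of_mem _ (hve i).1, mem_image_of_mem _ (hve i).2⟩⟩
  · exact hsucc i (hv (hinj _ (heG i) (hve i).1 (hve i).2 h))
  · exact disjoint_left.mp (hsep _ (heG _) _ (heG _) (he.ne (hsucc i)) h) (hve i).2 (hve (i + 1)).1

theorem blowup_matching_girth_general {W : Type*} [DecidableEq W]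
    (a : ℕ) (H : Finset (Finset W)) (hH3 : ∀ e ∈ H, e.card = 3)
    (hHgirth : ∀ k, 2 ≤ k → k ≤ 4 → ¬ BergeCycle H k)
    (G : Finset (Finset (W × Fin a)))
    (hsub : ∀ g ∈ G, g.card = 3 ∧ g.image Prod.fst ∈ H)
    (hmatch : ∀ g ∈ G, ∀ g' ∈ G, g ≠ g' → g.image Prod.fst = g'.image Prod.fst →
      Disjoint g g') :
    (∀ k, 2 ≤ k → k ≤ 4 → ¬ BergeCycle G k) ∧
      ¬ ∃ f : ZMod 4 → Finset (W × Fin a), (∀ i, f i ∈ G) ∧ Function.Injective f ∧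
        (∀ i, (f i ∩ f (i + 1)).card = 1) ∧ (∀ i, Disjoint (f i) (f (i + 2))) := by
  have hinj : ∀ g ∈ G, Set.InjOn Prod.fst (g : Set (W × Fin a)) := fun g hg =>
    card_image_iff.mp (by rw [hH3 _ (hsub g hg).2, (hsub g hg).1])
  have hgirth : ∀ k, 2 ≤ k → k ≤ 4 → ¬ BergeCycle G k := fun k hk2 hk4 hC =>
    hHgirth k hk2 hk4 <|
      (hC.nonbacktrackingBergeWalk_image Prod.fst (fun g hg => (hsub g hg).2) hinj hmatch
        (by omega)).bergeCycle (hHgirth 2 le_rfl (by norm_num)) (by omega) hk4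
  refine ⟨hgirth, fun ⟨f, hfG, hf, hcard, hdisj⟩ => hgirth 4 (by norm_num) le_rfl ?_⟩
  exact bergeCycle_four_of_inter_nonempty hfG hf (fun i => card_pos.mp (by rw [hcard i]; simp))
    hdisj

/-- if H is a 3-graph of girth ≥ 5 and G is a subgraph of the a-blowup
H(a) using only a matching inside each blown-up block, then G has girth ≥ 5; in
particular G contains no linear cycle C₄^{(3)}. -/
theorem blowup_matching_girth {W : Type*} [Fintype W] [DecidableEq W]
    (a : ℕ) (H : Finset (Finset W)) (hH3 : ∀ e ∈ H, e.card = 3)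
    (hHgirth : ∀ k, 2 ≤ k → k ≤ 4 → ¬ BergeCycle H k)
    (G : Finset (Finset (W × Fin a)))
    (hsub : ∀ g ∈ G, g.card = 3 ∧ g.image Prod.fst ∈ H)
    (hmatch : ∀ g ∈ G, ∀ g' ∈ G, g ≠ g' → g.image Prod.fst = g'.image Prod.fst →
      Disjoint g g') :
    (∀ k, 2 ≤ k → k ≤ 4 → ¬ BergeCycle G k) ∧
      ¬ ∃ f : ZMod 4 → Finset (W × Fin a), (∀ i, f i ∈ G) ∧ Function.Injective f ∧
        (∀ i, (f i ∩ f (i + 1)).card = 1) ∧ (∀ i, Disjoint (f i) (f (i + 2))) :=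
  blowup_matching_girth_general a H hH3 hHgirth G hsub hmatch
end
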